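/- arXiv:2512.13066 — 4 statements merged into one kernel-verified Lean document; each statement's English description precedes it below -/
import Mathlib

section
/- Let k, l be positive integers and L = 2π√((k² + kl + l²)/3). Define η₁ = -(2πi/(3L))(2k + l), η₂ = η₁ + (2πi/L)k, η₃ = η₂ + (2πi/L)l, and p = (2k + l)(k - l)(2l + k) / (3√3 (k² + kl + l²)^{3/2}). Then each η_j (j = 1, 2, 3) is a root of the equation η³ + η - ip = 0. -/
/-!
With `s = √((k² + kl + l²)/3)` we have `L = 2πs`, so `η_j = i a_j / (3s)` with
`a₁ = -(2k + l)`, `a₂ = k - l`, `a₃ = k + 2l`. These are the three roots of the depressed cubic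
`a³ - 3(k² + kl + l²) a + (2k + l)(k - l)(2l + k)`, and the substitution `η = i a / (3s)`
turns that cubic into `η³ + η - i p` because `k² + kl + l² = 3s²` and `p = (2k + l)(k - l)(2l + k) / (27 s³)`.
-/

open Complex Real

theorem cube_add_self_sub_I_mul_eq_zero_of_depressed_cubic {s Q M a : ℂ} (hs : s ≠ 0)
    (hQ : Q = 3 * s ^ 2) (ha : a ^ 3 - 3 * Q * a + M = 0) :
    (I * a / (3 * s)) ^ 3 + I * a / (3 * s) - I * (M / (27 * s ^ 3)) = 0 := by
  field_simp
  linear_combination (-27 * I) * ha - 81 * I * a * hQ + 27 * I * a ^ 3 * I_sq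

theorem three_mul_sqrt_three_mul_rpow_three_halves {Q : ℝ} (hQ : 0 ≤ Q) :
    3 * √3 * Q ^ ((3 : ℝ) / 2) = 27 * √(Q / 3) ^ 3 := by
  have h3 : √3 ^ 2 = 3 := Real.sq_sqrt (by norm_num)
  rw [Real.rpow_div_two_eq_sqrt _ hQ, Real.sqrt_div' _ (by norm_num : (0 : ℝ) ≤ 3)]
  norm_cast
  field_simp
  linear_combination 3 * √Q ^ 3 * (√3 ^ 2 + 3) * h3

theorem stmt_0_general (k l : ℕ) (hk : 0 < k)
    (L p : ℝ)
    (hL : L = 2 * Real.pi * Real.sqrt (((k:ℝ)^2 + k*l + l^2)/3))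
    (hp : p = ((2*(k:ℝ) + l) * ((k:ℝ) - l) * (2*(l:ℝ) + k)) /
      (3 * Real.sqrt 3 * (((k:ℝ)^2 + k*l + l^2)) ^ ((3:ℝ)/2)))
    (η₁ η₂ η₃ : ℂ)
    (h1 : η₁ = -(2 * Real.pi * Complex.I / (3 * L)) * (2*(k:ℂ) + l))
    (h2 : η₂ = η₁ + (2 * Real.pi * Complex.I / L) * k)
    (h3 : η₃ = η₂ + (2 * Real.pi * Complex.I / L) * l) :
    η₁^3 + η₁ - Complex.I * p = 0 ∧
    η₂^3 + η₂ - Complex.I * p = 0 ∧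
    η₃^3 + η₃ - Complex.I * p = 0 := by
  set Q : ℝ := (k:ℝ)^2 + k*l + l^2
  set s := √(Q / 3) with hs_def
  have hQ : 0 < Q := by positivity
  have hs : 0 < s := Real.sqrt_pos.mpr (by positivity)
  have hQs : (Q : ℂ) = 3 * (s : ℂ) ^ 2 := by
    rw [hs_def]; norm_cast; rw [Real.sq_sqrt (by positivity)]; ring
  rw [three_mul_sqrt_three_mul_rpow_three_halves hQ.le] at hp
  have hsC : (s : ℂ) ≠ 0 := by exact_mod_cast hs.ne'
  have hπ : (π : ℂ) ≠ 0 := by exact_mod_cast Real.pi_ne_zero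
  have e₁ : η₁ = I * (-(2 * k + l)) / (3 * s) := by rw [h1, hL]; push_cast; field_simp
  have e₂ : η₂ = I * (k - l) / (3 * s) := by rw [h2, e₁, hL]; push_cast; field_simp; ring
  have e₃ : η₃ = I * (k + 2 * l) / (3 * s) := by rw [h3, e₂, hL]; push_cast; field_simp; ring
  have hpC : (p : ℂ) = (2 * k + l) * (k - l) * (2 * l + k) / (27 * s ^ 3) := by
    rw [hp]; push_cast; rfl
  rw [e₁, e₂, e₃, hpC]
  refine ⟨?_, ?_, ?_⟩ <;>
    refine cube_add_self_sub_I_mul_eq_zero_of_depressed_cubic hsC hQs ?_ <;>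
    simp only [Q] <;> push_cast <;> ring

theorem stmt_0 (k l : ℕ) (hk : 0 < k) (hl : 0 < l)
    (L p : ℝ)
    (hL : L = 2 * Real.pi * Real.sqrt (((k:ℝ)^2 + k*l + l^2)/3))
    (hp : p = ((2*(k:ℝ) + l) * ((k:ℝ) - l) * (2*(l:ℝ) + k)) /
      (3 * Real.sqrt 3 * (((k:ℝ)^2 + k*l + l^2)) ^ ((3:ℝ)/2)))
    (η₁ η₂ η₃ : ℂ)
    (h1 : η₁ = -(2 * Real.pi * Complex.I / (3 * L)) * (2*(k:ℂ) + l))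
    (h2 : η₂ = η₁ + (2 * Real.pi * Complex.I / L) * k)
    (h3 : η₃ = η₂ + (2 * Real.pi * Complex.I / L) * l) :
    η₁^3 + η₁ - Complex.I * p = 0 ∧
    η₂^3 + η₂ - Complex.I * p = 0 ∧
    η₃^3 + η₃ - Complex.I * p = 0 :=
  stmt_0_general k l hk L p hL hp η₁ η₂ η₃ h1 h2 h3
end

section
/- Let k, l be positive integers with k > l, L = 2π√((k² + kl + l²)/3), p = (2k + l)(k - l)(2l + k)/(3√3 (k² + kl + l²)^{3/2}), and define η₁ = -(2πi/(3L))(2k + l), η₂ = η₁ + (2πi/L)k, η₃ = η₂ + (2πi/L)l. Set Γ = Σ_{j=1}^{3} (η_{j+1} - η_j) η_{j+2}² and Λ = ip Σ_{j=1}^{3} (η_{j+1} - η_j)/η_{j+2}. Then Γ = Λ = -(8π³/L³) i k l (k + l). -/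
/-!
Writing `ω = 2πi / (3L)`, the three numbers are `η₁ = -ω (2k + l)`, `η₂ = ω (k - l)`,
`η₃ = ω (k + 2l)`, so `Γ` is `ω³` times the alternant `(a - b)(b - c)(c - a)` of
`-(2k + l), k - l, k + 2l`, which equals `27 k l (k + l)`. The definition of `L` makes
`p = (2π / (3L))³ (2k + l)(k - l)(k + 2l)`, i.e. `i p = η₁ η₂ η₃`; clearing denominators then
turns `Λ` into `Γ`.
-/

open Real Complex

lemma mul_cyclic_sum_sub_div {K : Type*} [Field K] {a b c : K} (ha : a ≠ 0) (hb : b ≠ 0)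
    (hc : c ≠ 0) :
    a * b * c * ((b - a) / c + (c - b) / a + (a - c) / b) =
      (b - a) * c ^ 2 + (c - b) * a ^ 2 + (a - c) * b ^ 2 := by
  field_simp
  ring

lemma two_pi_div_three_mul_two_pi_sqrt_pow_three {Q : ℝ} (hQ : 0 ≤ Q) :
    (2 * π / (3 * (2 * π * √(Q / 3)))) ^ 3 = 1 / (3 * √3 * Q ^ ((3 : ℝ) / 2)) := by
  rcases hQ.eq_or_lt with rfl | hQ
  · simp
  have h3 : √3 ^ 2 = 3 := sq_sqrt (by norm_num)
  rw [rpow_div_two_eq_sqrt 3 hQ.le, rpow_ofNat, sqrt_div hQ.le]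
  field_simp
  linear_combination (√3 ^ 2 + 3) * h3

theorem stmt_5_general (k l : ℕ) (hkl : l < k)
    (L p : ℝ)
    (hL : L = 2 * Real.pi * Real.sqrt (((k:ℝ)^2 + k*l + l^2)/3))
    (hp : p = ((2*(k:ℝ) + l) * ((k:ℝ) - l) * (2*(l:ℝ) + k)) /
      (3 * Real.sqrt 3 * (((k:ℝ)^2 + k*l + l^2)) ^ ((3:ℝ)/2)))
    (η₁ η₂ η₃ Γ Λ : ℂ)
    (h1 : η₁ = -(2 * Real.pi * Complex.I / (3 * L)) * (2*(k:ℂ) + l))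
    (h2 : η₂ = η₁ + (2 * Real.pi * Complex.I / L) * k)
    (h3 : η₃ = η₂ + (2 * Real.pi * Complex.I / L) * l)
    (hΓ : Γ = (η₂ - η₁) * η₃^2 + (η₃ - η₂) * η₁^2 + (η₁ - η₃) * η₂^2)
    (hΛ : Λ = Complex.I * p * ((η₂ - η₁) / η₃ + (η₃ - η₂) / η₁ + (η₁ - η₃) / η₂)) :
    Γ = -(8 * Real.pi^3 / L^3) * Complex.I * k * l * (k + l) ∧
    Λ = -(8 * Real.pi^3 / L^3) * Complex.I * k * l * (k + l) := by
  have hk : (0 : ℝ) < k := by exact_mod_cast (Nat.zero_le l).trans_lt hkl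
  have hL₀ : (L : ℂ) ≠ 0 := by
    rw [hL]; exact_mod_cast (by positivity : 2 * π * √(((k:ℝ)^2 + k*l + l^2)/3) ≠ 0)
  have hω : 2 * π * I / (3 * L) ≠ 0 := by simp [hL₀, pi_ne_zero]
  have e₁ : η₁ = 2 * π * I / (3 * L) * -(2 * k + l) := by rw [h1]; ring
  have e₂ : η₂ = 2 * π * I / (3 * L) * (k - l) := by rw [h2, e₁]; field_simp; ring
  have e₃ : η₃ = 2 * π * I / (3 * L) * (k + 2 * l) := by rw [h3, e₂]; field_simp; ring
  have hη₁ : η₁ ≠ 0 := e₁ ▸ mul_ne_zero hω (neg_ne_zero.mpr (by norm_cast; omega))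
  have hη₂ : η₂ ≠ 0 := e₂ ▸ mul_ne_zero hω (sub_ne_zero.mpr (by exact_mod_cast hkl.ne'))
  have hη₃ : η₃ ≠ 0 := e₃ ▸ mul_ne_zero hω (by norm_cast; omega)
  have hΓ' : Γ = -(8 * π ^ 3 / L ^ 3) * I * k * l * (k + l) := by
    rw [hΓ, e₁, e₂, e₃]
    field_simp
    rw [I_sq]
    ring
  have hp' : p = (2 * π / (3 * L)) ^ 3 * ((2 * k + l) * (k - l) * (2 * l + k)) := by
    rw [hp, hL, two_pi_div_three_mul_two_pi_sqrt_pow_three (by positivity)]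
    ring
  have hIp : I * p = η₁ * η₂ * η₃ := by
    rw [hp', e₁, e₂, e₃]
    push_cast
    field_simp
    rw [I_sq]
    ring
  refine ⟨hΓ', ?_⟩
  rw [hΛ, hIp, mul_cyclic_sum_sub_div hη₁ hη₂ hη₃, ← hΓ, hΓ']

theorem stmt_5 (k l : ℕ) (hl : 0 < l) (hkl : l < k)
    (L p : ℝ)
    (hL : L = 2 * Real.pi * Real.sqrt (((k:ℝ)^2 + k*l + l^2)/3))
    (hp : p = ((2*(k:ℝ) + l) * ((k:ℝ) - l) * (2*(l:ℝ) + k)) /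
      (3 * Real.sqrt 3 * (((k:ℝ)^2 + k*l + l^2)) ^ ((3:ℝ)/2)))
    (η₁ η₂ η₃ Γ Λ : ℂ)
    (h1 : η₁ = -(2 * Real.pi * Complex.I / (3 * L)) * (2*(k:ℂ) + l))
    (h2 : η₂ = η₁ + (2 * Real.pi * Complex.I / L) * k)
    (h3 : η₃ = η₂ + (2 * Real.pi * Complex.I / L) * l)
    (hΓ : Γ = (η₂ - η₁) * η₃^2 + (η₃ - η₂) * η₁^2 + (η₁ - η₃) * η₂^2)
    (hΛ : Λ = Complex.I * p * ((η₂ - η₁) / η₃ + (η₃ - η₂) / η₁ + (η₁ - η₃) / η₂)) :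
    Γ = -(8 * Real.pi^3 / L^3) * Complex.I * k * l * (k + l) ∧
    Λ = -(8 * Real.pi^3 / L^3) * Complex.I * k * l * (k + l) :=
  stmt_5_general k l hkl L p hL hp η₁ η₂ η₃ Γ Λ h1 h2 h3 hΓ hΛ
end

section
/- Let 0 < α < 1, T > 0, and let w ∈ L²(ℝ) with support contained in [-T, T]. Then there exists a constant C > 0 depending only on α such that ∫_ℝ |ŵ(z)|²/(1 + |z|)^α dz ≤ C T^α ‖w‖²_{L²(ℝ)}, where ŵ denotes the Fourier transform of w. -/
/-!
Split the frequency line at `|z| = 1/T`. For any `z`, `‖ŵ z‖ ≤ ‖w‖₁ ≤ (2T)^{1/2} ‖w‖₂` by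
Cauchy–Schwarz on `[-T, T]`, and `∫_{|z| ≤ 1/T} (1 + |z|)^{-α} ≤ 2 T^{α-1} / (1 - α)`, so the low
frequencies contribute at most `4/(1-α) · T^α ‖w‖₂²`. On the high frequencies
`(1 + |z|)^{-α} ≤ T^α`, and Plancherel bounds their contribution by `T^α ‖w‖₂²`. Plancherel for the
`L¹ ∩ L²` function `w` comes from the `L²` Fourier transform, which agrees with the Fourier integral
on `L¹ ∩ L²` because both define the same tempered distribution.
-/

open MeasureTheory Real Complex

open Set FourierTransform SchwartzMap

theorem MeasureTheory.L2.integral_norm_sq_eq_norm_sq {α H : Type*} [MeasurableSpace α]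
    {μ : Measure α} [NormedAddCommGroup H] [InnerProductSpace ℂ H] (F : α →₂[μ] H) :
    ∫ x, ‖F x‖ ^ 2 ∂μ = ‖F‖ ^ 2 := by
  have h := L2.inner_def (𝕜 := ℂ) F F
  simp only [inner_self_eq_norm_sq_to_K] at h
  norm_cast at h
  exact h.symm

theorem sq_integral_norm_le_measureReal_mul {α E : Type*} [MeasurableSpace α] {μ : Measure α}
    [NormedAddCommGroup E] {f : α → E} {s : Set α} (hμs : μ s ≠ ⊤)
    (hsupp : Function.support f ⊆ s) (hf : MemLp f 2 μ) :
    (∫ x, ‖f x‖ ∂μ) ^ 2 ≤ μ.real s * ∫ x, ‖f x‖ ^ 2 ∂μ := by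
  have hrestrict : ∀ g : E → ℝ, g 0 = 0 → ∫ x, g (f x) ∂μ = ∫ x in s, g (f x) ∂μ := fun g hg =>
    (setIntegral_eq_integral_of_forall_compl_eq_zero fun x hx => by
      rw [Function.notMem_support.mp fun h => hx (hsupp h), hg]).symm
  have : IsFiniteMeasure (μ.restrict s) := isFiniteMeasure_restrict.2 hμs
  have hHolder := integral_mul_le_Lp_mul_Lq_of_nonneg Real.HolderConjugate.two_two
    (ae_of_all _ fun x => norm_nonneg (f x)) (ae_of_all _ fun _ => zero_le_one)
    (by simpa using (hf.restrict s).norm) (memLp_const (μ := μ.restrict s) (1 : ℝ))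
  simp only [mul_one, one_pow, rpow_two, integral_const, smul_eq_mul,
    measureReal_restrict_apply_univ, ← sqrt_eq_rpow] at hHolder
  rw [hrestrict (‖·‖) norm_zero, hrestrict (‖·‖ ^ 2) (by simp), mul_comm]
  calc (∫ x in s, ‖f x‖ ∂μ) ^ 2 ≤ (√(∫ x in s, ‖f x‖ ^ 2 ∂μ) * √(μ.real s)) ^ 2 :=
        pow_le_pow_left₀ (integral_nonneg fun _ => norm_nonneg _) hHolder 2
    _ = _ := by
      rw [mul_pow, sq_sqrt (integral_nonneg fun _ => by positivity), sq_sqrt measureReal_nonneg]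

theorem MeasureTheory.MemLp.integrable_of_support_subset {α E : Type*} [MeasurableSpace α]
    {μ : Measure α} [NormedAddCommGroup E] {p : ENNReal} {f : α → E} {s : Set α}
    (hf : MemLp f p μ) (hp : 1 ≤ p) (hμs : μ s ≠ ⊤) (hsupp : Function.support f ⊆ s) :
    Integrable f μ :=
  have : IsFiniteMeasure (μ.restrict s) := isFiniteMeasure_restrict.2 hμs
  (integrableOn_iff_integrable_of_support_subset hsupp).1 ((hf.restrict s).integrable hp)

section Fourier

variable {V : Type*} [NormedAddCommGroup V] [InnerProductSpace ℝ V] [FiniteDimensional ℝ V]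
  [MeasurableSpace V] [BorelSpace V]

theorem sq_norm_fourier_le_of_support_subset {E : Type*} [NormedAddCommGroup E] [NormedSpace ℂ E]
    {f : V → E} {s : Set V} (hs : volume s ≠ ⊤)
    (hsupp : Function.support f ⊆ s) (hf : MemLp f 2) (ξ : V) :
    ‖𝓕 f ξ‖ ^ 2 ≤ volume.real s * ∫ x, ‖f x‖ ^ 2 :=
  (pow_le_pow_left₀ (norm_nonneg _)
    (VectorFourier.norm_fourierIntegral_le_integral_norm _ _ _ f ξ) 2).trans
    (sq_integral_norm_le_measureReal_mul hs hsupp hf)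

variable {H : Type*} [NormedAddCommGroup H] [InnerProductSpace ℂ H] [CompleteSpace H] {f : V → H}

/-- Pairing with test functions, this is the self-adjointness `∫ 𝓕 φ • f = ∫ φ • 𝓕 f`
of the Fourier integral. -/
theorem MeasureTheory.MemLp.coeFn_fourier_toLp (hf2 : MemLp f 2) (hf1 : Integrable f) :
    ((𝓕 (hf2.toLp f) : Lp H 2 (volume : Measure V)) : V → H) =ᵐ[volume] 𝓕 f := by
  have hcont : Continuous (𝓕 f) :=
    VectorFourier.fourierIntegral_continuous continuous_fourierChar
      (innerSL ℝ).continuous₂ hf1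
  refine ae_eq_of_integral_contDiff_smul_eq ((Lp.memLp _).locallyIntegrable one_le_two)
    hcont.locallyIntegrable fun g hg hgc => ?_
  set φ : 𝓢(V, ℂ) := (hgc.comp_left Complex.ofReal_zero).toSchwartzMap
    (ofRealCLM.contDiff.comp hg)
  have hφ : ∀ x, φ x = g x := fun x => rfl
  have hdual := congrArg (fun T : 𝓢'(V, H) => T φ)
    (Lp.fourier_toTemperedDistribution_eq (hf2.toLp f))
  simp only [TemperedDistribution.fourier_apply, Lp.toTemperedDistribution_apply] at hdual
  have hself : ∫ ξ, 𝓕 (φ : V → ℂ) ξ • f ξ = ∫ x, φ x • 𝓕 f x := by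
    have := VectorFourier.integral_fourierIntegral_smul_eq_flip (L := innerₗ V)
      (μ := volume) (ν := volume) continuous_fourierChar continuous_inner φ.integrable hf1
    rwa [flip_innerₗ] at this
  calc ∫ x, g x • (𝓕 (hf2.toLp f) : Lp H 2 volume) x
      = ∫ x, 𝓕 φ x • hf2.toLp f x := by simp_rw [hdual, hφ, coe_smul]
    _ = ∫ x, 𝓕 (φ : V → ℂ) x • f x :=
        integral_congr_ae (hf2.coeFn_toLp.mono fun x hx => by simp only [hx, fourier_coe])
    _ = ∫ x, g x • 𝓕 f x := by simp_rw [hself, hφ, coe_smul]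

theorem MeasureTheory.MemLp.fourier (hf2 : MemLp f 2) (hf1 : Integrable f) : MemLp (𝓕 f) 2 :=
  (Lp.memLp _).ae_eq (hf2.coeFn_fourier_toLp hf1)

theorem MeasureTheory.MemLp.integral_norm_sq_fourier (hf2 : MemLp f 2) (hf1 : Integrable f) :
    ∫ ξ, ‖𝓕 f ξ‖ ^ 2 = ∫ x, ‖f x‖ ^ 2 := by
  calc ∫ ξ, ‖𝓕 f ξ‖ ^ 2
      = ∫ ξ, ‖(𝓕 (hf2.toLp f) : Lp H 2 (volume : Measure V)) ξ‖ ^ 2 :=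
        integral_congr_ae ((hf2.coeFn_fourier_toLp hf1).mono fun ξ hξ => by simp only [hξ])
    _ = ∫ x, ‖hf2.toLp f x‖ ^ 2 := by
        rw [L2.integral_norm_sq_eq_norm_sq, L2.integral_norm_sq_eq_norm_sq, Lp.norm_fourier_eq]
    _ = ∫ x, ‖f x‖ ^ 2 := integral_congr_ae (hf2.coeFn_toLp.mono fun x hx => by simp only [hx])

end Fourier

theorem integral_Icc_one_add_abs_rpow_neg_le {α m : ℝ} (hα0 : 0 ≤ α) (hα1 : α < 1)
    (hm : 0 ≤ m) : ∫ z in Icc (-m) m, (1 + |z|) ^ (-α) ≤ 2 * m ^ (1 - α) / (1 - α) := by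
  have hIcc : Icc (-m) m = (|·|) ⁻¹' Iic m := by ext; simp [abs_le]
  calc ∫ z in Icc (-m) m, (1 + |z|) ^ (-α)
      = ∫ z, (Iic m).indicator (fun x => (1 + x) ^ (-α)) |z| := by
        rw [← integral_indicator measurableSet_Icc, hIcc]
        rfl
    _ = 2 * ∫ x in (0)..m, (1 + x) ^ (-α) := by
        rw [integral_comp_abs, setIntegral_indicator measurableSet_Iic, Ioi_inter_Iic,
          intervalIntegral.integral_of_le hm]
    _ = 2 * (((1 + m) ^ (1 - α) - 1) / (1 - α)) := by
        rw [intervalIntegral.integral_comp_add_left (fun x => x ^ (-α)),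
          integral_rpow (Or.inl (by linarith)), add_zero, one_rpow]
        ring_nf
    _ ≤ 2 * m ^ (1 - α) / (1 - α) := by
        have := rpow_add_le_add_rpow zero_le_one hm (by linarith : 0 ≤ 1 - α) (by linarith)
        rw [one_rpow] at this
        rw [mul_div_assoc]
        gcongr
        linarith

theorem div_one_add_abs_rpow_le_indicator_add {α T a K : ℝ} (hα0 : 0 ≤ α) (hT : 0 < T)
    (ha : 0 ≤ a) (haK : a ≤ K) (z : ℝ) :
    a / (1 + |z|) ^ α ≤
      (Icc (-T⁻¹) T⁻¹).indicator (fun z => K * (1 + |z|) ^ (-α)) z + T ^ α * a := by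
  by_cases hz : z ∈ Icc (-T⁻¹) T⁻¹
  · rw [indicator_of_mem hz, rpow_neg (by positivity), ← div_eq_mul_inv]
    have := div_le_div_of_nonneg_right haK (by positivity : 0 ≤ (1 + |z|) ^ α)
    nlinarith [show 0 ≤ T ^ α * a by positivity]
  · rw [indicator_of_notMem hz, zero_add]
    have hz' : T⁻¹ ≤ 1 + |z| := by
      rw [mem_Icc, ← abs_le, not_le] at hz
      linarith
    calc a / (1 + |z|) ^ α ≤ a / T⁻¹ ^ α :=
          div_le_div_of_nonneg_left ha (by positivity) (rpow_le_rpow (by positivity) hz' hα0)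
      _ = T ^ α * a := by rw [inv_rpow hT.le, div_inv_eq_mul, mul_comm]

theorem integral_norm_sq_fourier_div_one_add_abs_rpow_le {H : Type*} [NormedAddCommGroup H]
    [InnerProductSpace ℂ H] [CompleteSpace H] {α T : ℝ} (hα0 : 0 ≤ α) (hα1 : α < 1) (hT : 0 < T)
    {w : ℝ → H} (hw2 : MemLp w 2) (hw1 : Integrable w) (hsupp : Function.support w ⊆ Icc (-T) T) :
    ∫ z, ‖𝓕 w z‖ ^ 2 / (1 + |z|) ^ α ≤ (4 / (1 - α) + 1) * T ^ α * ∫ t, ‖w t‖ ^ 2 := by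
  set N := ∫ t, ‖w t‖ ^ 2
  set m := T⁻¹
  have hm : 0 < m := inv_pos.2 hT
  have hpt : ∀ z, ‖𝓕 w z‖ ^ 2 ≤ 2 * T * N := fun z => by
    have := sq_norm_fourier_le_of_support_subset measure_Icc_lt_top.ne hsupp hw2 z
    rwa [Real.volume_real_Icc_of_le (by linarith), sub_neg_eq_add, ← two_mul] at this
  have hsplit : ∀ z, ‖𝓕 w z‖ ^ 2 / (1 + |z|) ^ α ≤
      (Icc (-m) m).indicator (fun z => 2 * T * N * (1 + |z|) ^ (-α)) z + T ^ α * ‖𝓕 w z‖ ^ 2 :=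
    fun z => div_one_add_abs_rpow_le_indicator_add hα0 hT (by positivity) (hpt z) z
  have hweight : Continuous fun z : ℝ => (1 + |z|) ^ (-α) :=
    (continuous_const.add continuous_abs).rpow_const fun z => Or.inl (by positivity : 1 + |z| ≠ 0)
  have hlow : Integrable ((Icc (-m) m).indicator (fun z => 2 * T * N * (1 + |z|) ^ (-α))) :=
    ((continuous_const.mul hweight).integrableOn_Icc).integrable_indicator measurableSet_Icc
  have hhigh : Integrable (fun z => T ^ α * ‖𝓕 w z‖ ^ 2) :=
    ((hw2.fourier hw1).integrable_norm_pow two_ne_zero).const_mul _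
  calc ∫ z, ‖𝓕 w z‖ ^ 2 / (1 + |z|) ^ α
      ≤ ∫ z, ((Icc (-m) m).indicator (fun z => 2 * T * N * (1 + |z|) ^ (-α)) z
          + T ^ α * ‖𝓕 w z‖ ^ 2) :=
        integral_mono_of_nonneg (ae_of_all _ fun z => by positivity) (hlow.add hhigh)
          (ae_of_all _ hsplit)
    _ = 2 * T * N * (∫ z in Icc (-m) m, (1 + |z|) ^ (-α)) + T ^ α * N := by
        rw [integral_add hlow hhigh, integral_indicator measurableSet_Icc, integral_const_mul,
          integral_const_mul, hw2.integral_norm_sq_fourier hw1]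
    _ ≤ 2 * T * N * (2 * m ^ (1 - α) / (1 - α)) + T ^ α * N := by
        have hN : 0 ≤ N := integral_nonneg fun _ => by positivity
        gcongr
        exact integral_Icc_one_add_abs_rpow_neg_le hα0 hα1 hm.le
    _ = (4 / (1 - α) + 1) * T ^ α * N := by
        have hTm : T * m ^ (1 - α) = T ^ α := by
          rw [inv_rpow hT.le, rpow_sub hT, rpow_one]
          field_simp
        have : 1 - α ≠ 0 := by linarith
        field_simp
        linear_combination (4 * N) * hTm

theorem stmt_14 (α : ℝ) (hα : 0 < α) (hα1 : α < 1) :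
    ∃ C > 0, ∀ (T : ℝ), 0 < T → ∀ (w : ℝ → ℂ),
      MeasureTheory.MemLp w 2 (volume : Measure ℝ) →
      Function.support w ⊆ Set.Icc (-T) T →
      ∫ z : ℝ, ‖FourierTransform.fourier w z‖^2 / (1 + |z|)^α ≤
        C * T^α * ∫ t : ℝ, ‖w t‖^2 := by
  have h1α : 0 < 1 - α := by linarith
  exact ⟨4 / (1 - α) + 1, by positivity, fun T hT w hw2 hsupp =>
    integral_norm_sq_fourier_div_one_add_abs_rpow_le hα.le hα1 hT hw2
      (hw2.integrable_of_support_subset one_le_two measure_Icc_lt_top.ne hsupp) hsupp⟩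
end

section
/- Let L > 0, p ∈ ℝ, and let Ψ₁, Ψ₂ : [0, L] → ℝ be smooth functions such that y(t, x) := cos(pt)Ψ₁(x) + sin(pt)Ψ₂(x) satisfies y_t + y_x + y_{xxx} = 0 on ℝ × [0, L] together with y(t, 0) = y(t, L) = y_x(t, 0) = y_x(t, L) = 0 for all t. Then ∫₀^L Ψ₁(x)² dx = ∫₀^L Ψ₂(x)² dx and ∫₀^L Ψ₁(x)Ψ₂(x) dx = 0. -/
open Real intervalIntegral

lemma aux_trig {p : ℝ} (hp : p ≠ 0) {u v : ℝ}
    (h : ∀ t, Real.cos (p*t) * u + Real.sin (p*t) * v = 0) : u = 0 ∧ v = 0 := by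
  constructor
  · have := h 0; simpa using this
  · have h2 := h (π/(2*p))
    rw [show p*(π/(2*p)) = π/2 by field_simp] at h2
    simpa using h2

lemma deriv_comb {f g : ℝ → ℝ} (hf : Differentiable ℝ f) (hg : Differentiable ℝ g) (c s : ℝ) :
    deriv (fun x => c * f x + s * g x) = fun x => c * deriv f x + s * deriv g x := by
  funext x
  rw [deriv_fun_add ((hf x).const_mul c) ((hg x).const_mul s),
    deriv_const_mul c (hf x), deriv_const_mul s (hg x)]

lemma smooth_deriv {f : ℝ → ℝ} (hf : ContDiff ℝ (⊤:ℕ∞) f) : ContDiff ℝ (⊤:ℕ∞) (deriv f) :=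
  (contDiff_infty_iff_deriv.mp hf).2

theorem stmt_18 (L p : ℝ) (hL : 0 < L) (hp : p ≠ 0)
    (Ψ₁ Ψ₂ : ℝ → ℝ) (hΨ₁ : ContDiff ℝ (⊤ : ℕ∞) Ψ₁) (hΨ₂ : ContDiff ℝ (⊤ : ℕ∞) Ψ₂)
    (y : ℝ → ℝ → ℝ)
    (hy : ∀ t x, y t x = Real.cos (p*t) * Ψ₁ x + Real.sin (p*t) * Ψ₂ x)
    (hPDE : ∀ t : ℝ, ∀ x ∈ Set.Icc (0:ℝ) L,
      deriv (fun s => y s x) t + deriv (y t) x + iteratedDeriv 3 (y t) x = 0)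
    (hbc0 : ∀ t : ℝ, y t 0 = 0)
    (hbcL : ∀ t : ℝ, y t L = 0)
    (hbc0' : ∀ t : ℝ, deriv (y t) 0 = 0)
    (hbcL' : ∀ t : ℝ, deriv (y t) L = 0) :
    (∫ x in (0:ℝ)..L, (Ψ₁ x)^2) = (∫ x in (0:ℝ)..L, (Ψ₂ x)^2) ∧
    (∫ x in (0:ℝ)..L, Ψ₁ x * Ψ₂ x) = 0 := by
  -- smoothness
  have s1 : ContDiff ℝ (⊤:ℕ∞) Ψ₁ := hΨ₁.of_le (by simp)
  have s2 : ContDiff ℝ (⊤:ℕ∞) Ψ₂ := hΨ₂.of_le (by simp)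
  have s1' := smooth_deriv s1; have s2' := smooth_deriv s2
  have s1'' := smooth_deriv s1'; have s2'' := smooth_deriv s2'
  have d1 : Differentiable ℝ Ψ₁ := s1.differentiable (by simp)
  have d2 : Differentiable ℝ Ψ₂ := s2.differentiable (by simp)
  have d1' : Differentiable ℝ (deriv Ψ₁) := s1'.differentiable (by simp)
  have d2' : Differentiable ℝ (deriv Ψ₂) := s2'.differentiable (by simp)
  have d1'' : Differentiable ℝ (deriv (deriv Ψ₁)) := s1''.differentiable (by simp)
  have d2'' : Differentiable ℝ (deriv (deriv Ψ₂)) := s2''.differentiable (by simp)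
  have hyt : ∀ t, y t = fun x => Real.cos (p*t) * Ψ₁ x + Real.sin (p*t) * Ψ₂ x :=
    fun t => funext (hy t)
  have hderiv_yt : ∀ t, deriv (y t)
      = fun x => Real.cos (p*t) * deriv Ψ₁ x + Real.sin (p*t) * deriv Ψ₂ x := by
    intro t; rw [hyt t, deriv_comb d1 d2]
  have h3yt : ∀ t, iteratedDeriv 3 (y t)
      = fun x => Real.cos (p*t) * deriv (deriv (deriv Ψ₁)) x
          + Real.sin (p*t) * deriv (deriv (deriv Ψ₂)) x := by
    intro t
    rw [show (3:ℕ) = 0 + 1 + 1 + 1 by rfl, iteratedDeriv_succ, iteratedDeriv_succ,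
      iteratedDeriv_succ, iteratedDeriv_zero, hyt t, deriv_comb d1 d2,
      deriv_comb d1' d2', deriv_comb d1'' d2'']
  -- time derivative
  have ht : ∀ t x, deriv (fun s => y s x) t
      = p * Real.cos (p*t) * Ψ₂ x - p * Real.sin (p*t) * Ψ₁ x := by
    intro t x
    have hfun : (fun s => y s x) = fun s => Real.cos (p*s) * Ψ₁ x + Real.sin (p*s) * Ψ₂ x :=
      funext fun s => hy s x
    have hps : HasDerivAt (fun s : ℝ => p*s) p t := by
      simpa using (hasDerivAt_id t).const_mul p
    have hc : HasDerivAt (fun s => Real.cos (p*s)) (-Real.sin (p*t) * p) t :=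
      (Real.hasDerivAt_cos (p*t)).comp t hps
    have hs : HasDerivAt (fun s => Real.sin (p*s)) (Real.cos (p*t) * p) t :=
      (Real.hasDerivAt_sin (p*t)).comp t hps
    rw [hfun, ((hc.mul_const (Ψ₁ x)).fun_add (hs.mul_const (Ψ₂ x))).deriv]
    ring
  -- ODE system
  have hODE : ∀ x ∈ Set.Icc (0:ℝ) L,
      deriv Ψ₁ x + deriv (deriv (deriv Ψ₁)) x = -(p * Ψ₂ x) ∧
      deriv Ψ₂ x + deriv (deriv (deriv Ψ₂)) x = p * Ψ₁ x := by
    intro x hx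
    have key : ∀ t, Real.cos (p*t) * (p * Ψ₂ x + deriv Ψ₁ x + deriv (deriv (deriv Ψ₁)) x)
        + Real.sin (p*t) * (-(p * Ψ₁ x) + deriv Ψ₂ x + deriv (deriv (deriv Ψ₂)) x) = 0 := by
      intro t
      have h := hPDE t x hx
      rw [ht t x, hderiv_yt t, h3yt t] at h
      simp only at h
      linear_combination h
    obtain ⟨h1, h2⟩ := aux_trig hp key
    constructor <;> linarith
  -- boundary values
  have hbv : ∀ a, (∀ t, y t a = 0) → Ψ₁ a = 0 ∧ Ψ₂ a = 0 := by
    intro a h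
    exact aux_trig hp (fun t => by rw [← hy t a]; exact h t)
  have hbv' : ∀ a, (∀ t, deriv (y t) a = 0) → deriv Ψ₁ a = 0 ∧ deriv Ψ₂ a = 0 := by
    intro a h
    refine aux_trig hp (fun t => ?_)
    have h' := h t
    rw [hderiv_yt t] at h'
    exact h'
  obtain ⟨e10, e20⟩ := hbv 0 hbc0
  obtain ⟨e1L, e2L⟩ := hbv L hbcL
  obtain ⟨f10, f20⟩ := hbv' 0 hbc0'
  obtain ⟨f1L, f2L⟩ := hbv' L hbcL'
  -- pointwise HasDerivAt facts
  have a1 : ∀ x, HasDerivAt Ψ₁ (deriv Ψ₁ x) x := fun x => (d1 x).hasDerivAt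
  have a2 : ∀ x, HasDerivAt Ψ₂ (deriv Ψ₂ x) x := fun x => (d2 x).hasDerivAt
  have a1' : ∀ x, HasDerivAt (deriv Ψ₁) (deriv (deriv Ψ₁) x) x := fun x => (d1' x).hasDerivAt
  have a2' : ∀ x, HasDerivAt (deriv Ψ₂) (deriv (deriv Ψ₂) x) x := fun x => (d2' x).hasDerivAt
  have a1'' : ∀ x, HasDerivAt (deriv (deriv Ψ₁)) (deriv (deriv (deriv Ψ₁)) x) x :=
    fun x => (d1'' x).hasDerivAt
  have a2'' : ∀ x, HasDerivAt (deriv (deriv Ψ₂)) (deriv (deriv (deriv Ψ₂)) x) x :=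
    fun x => (d2'' x).hasDerivAt
  -- First conclusion via G
  set G : ℝ → ℝ := fun x => Ψ₁ x * Ψ₂ x + Ψ₁ x * deriv (deriv Ψ₂) x
      + deriv (deriv Ψ₁) x * Ψ₂ x - deriv Ψ₁ x * deriv Ψ₂ x with hGdef
  have hG : ∀ x ∈ Set.uIcc (0:ℝ) L, HasDerivAt G (p * ((Ψ₁ x)^2 - (Ψ₂ x)^2)) x := by
    intro x hx
    rw [Set.uIcc_of_le hL.le] at hx
    obtain ⟨o1, o2⟩ := hODE x hx
    have H := ((((a1 x).fun_mul (a2 x)).fun_add ((a1 x).fun_mul (a2'' x))).fun_add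
      ((a1'' x).fun_mul (a2 x))).fun_sub ((a1' x).fun_mul (a2' x))
    refine H.congr_deriv (Eq.symm ?_)
    linear_combination (-(Ψ₂ x)) * o1 + (-(Ψ₁ x)) * o2
  have c1 : Continuous Ψ₁ := s1.continuous
  have c2 : Continuous Ψ₂ := s2.continuous
  have i1 : IntervalIntegrable (fun x => (Ψ₁ x)^2) MeasureTheory.volume 0 L :=
    (c1.pow 2).intervalIntegrable _ _
  have i2 : IntervalIntegrable (fun x => (Ψ₂ x)^2) MeasureTheory.volume 0 L :=
    (c2.pow 2).intervalIntegrable _ _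
  have key1 : ∫ x in (0:ℝ)..L, p * ((Ψ₁ x)^2 - (Ψ₂ x)^2) = G L - G 0 :=
    integral_eq_sub_of_hasDerivAt hG
      ((continuous_const.mul ((c1.pow 2).sub (c2.pow 2))).intervalIntegrable _ _)
  have hGL : G L = 0 := by rw [hGdef]; simp only; rw [e1L, e2L, f1L]; ring
  have hG0 : G 0 = 0 := by rw [hGdef]; simp only; rw [e10, e20, f10]; ring
  rw [hGL, hG0, sub_zero, intervalIntegral.integral_const_mul,
    intervalIntegral.integral_sub i1 i2] at key1
  have conc1 : (∫ x in (0:ℝ)..L, (Ψ₁ x)^2) = (∫ x in (0:ℝ)..L, (Ψ₂ x)^2) := by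
    rcases mul_eq_zero.mp key1 with h | h
    · exact absurd h hp
    · linarith [h]
  -- Second conclusion via H
  set Hf : ℝ → ℝ := fun x => Ψ₁ x * Ψ₁ x / 2 + Ψ₁ x * deriv (deriv Ψ₁) x
      - deriv Ψ₁ x * deriv Ψ₁ x / 2 with hHdef
  have hH : ∀ x ∈ Set.uIcc (0:ℝ) L, HasDerivAt Hf ((-p) * (Ψ₁ x * Ψ₂ x)) x := by
    intro x hx
    rw [Set.uIcc_of_le hL.le] at hx
    obtain ⟨o1, _⟩ := hODE x hx
    have H := ((((a1 x).fun_mul (a1 x)).div_const 2).fun_add ((a1 x).fun_mul (a1'' x))).fun_sub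
      (((a1' x).fun_mul (a1' x)).div_const 2)
    refine H.congr_deriv (Eq.symm ?_)
    linear_combination (-(Ψ₁ x)) * o1
  have key2 : ∫ x in (0:ℝ)..L, (-p) * (Ψ₁ x * Ψ₂ x) = Hf L - Hf 0 :=
    integral_eq_sub_of_hasDerivAt hH
      ((continuous_const.mul (c1.mul c2)).intervalIntegrable _ _)
  have hHL : Hf L = 0 := by rw [hHdef]; simp only; rw [e1L, f1L]; ring
  have hH0 : Hf 0 = 0 := by rw [hHdef]; simp only; rw [e10, f10]; ring
  rw [hHL, hH0, sub_zero, intervalIntegral.integral_const_mul] at key2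
  have conc2 : (∫ x in (0:ℝ)..L, Ψ₁ x * Ψ₂ x) = 0 := by
    rcases mul_eq_zero.mp key2 with h | h
    · exact absurd (neg_eq_zero.mp h) hp
    · exact h
  exact ⟨conc1, conc2⟩
end
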